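/- Let p be a prime, d ≥ 1, and let f be an irreducible element of R_{d,p} with |S(f)| ≥ 2. Then the support S(f) is a non-mixing shape for the algebraic ℤ^d-action α_f associated to R_{d,p}/⟨f⟩; consequently S(α_f) ≤ |S(f)| − 1. -/

import Mathlib

/-!
In characteristic `p`, `f ^ p ^ j = ∑ₙ c_n u^(p^j n)`, and every `x ∈ X_f` is annihilated by the
whole ideal `⟨f⟩`; hence `∑ₙ c_n x(p^j n) = 0` for every `j`. Prescribing the coordinates
`x(p^j n) = a_n` for `n ∈ S(f)` with `∑ₙ c_n a_n ≠ 0` thus gives an empty set for every `k = p^j`,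
although each condition `x(0) = a` has positive Haar measure (the fibres of the surjective map
`x ↦ x(0)` are translates of one another). So mixing fails along `k = p^j`, and it fails for
every larger shape too, because a sub-shape of a mixing shape is a mixing shape.
-/

open MeasureTheory Filter Topology

noncomputable section

/-- The Laurent polynomial ring `R_{d,p} = 𝔽_p[u_1^{±1},…,u_d^{±1}]`,
realized as the group algebra of `ℤ^d` over `𝔽_p`. -/
abbrev Rdp (p d : ℕ) : Type := AddMonoidAlgebra (ZMod p) (Fin d → ℤ)

/-- The monomial `u^n` in `R_{d,p}`. -/
def mono (p : ℕ) {d : ℕ} (n : Fin d → ℤ) : Rdp p d :=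
  AddMonoidAlgebra.single n 1

/-- A sequence of `r`-tuples of vectors in `ℤ^d` moves apart if all pairwise
differences tend to infinity in norm. -/
def MovesApart {d r : ℕ} (n : ℕ → Fin r → (Fin d → ℤ)) : Prop :=
  ∀ s t : Fin r, s ≠ t → Tendsto (fun j => ‖n j s - n j t‖) atTop atTop

/-- A `ℤ^d`-action `α` on a measure space is mixing of order `r` (`r`-mixing). -/
def IsMixingOfOrder {X : Type*} [MeasurableSpace X] {d : ℕ}
    (μ : Measure X) (α : (Fin d → ℤ) → X → X) (r : ℕ) : Prop :=
  ∀ n : ℕ → Fin r → (Fin d → ℤ), MovesApart n →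
    ∀ A : Fin r → Set X, (∀ i, MeasurableSet (A i)) →
      Tendsto (fun j => μ (⋂ i, α (n j i) ⁻¹' A i)) atTop (𝓝 (∏ i, μ (A i)))

/-- The order of mixing `M(α)`: the supremum of all `r` for which `α` is `r`-mixing. -/
def mixingOrder {X : Type*} [MeasurableSpace X] {d : ℕ}
    (μ : Measure X) (α : (Fin d → ℤ) → X → X) : ℕ∞ :=
  sSup ((↑) '' {r : ℕ | IsMixingOfOrder μ α r})

/-- The finite set `{n 0, …, n (r-1)}` (enumerated injectively) is a mixing shape
for `α`. -/
def IsMixingShape {X : Type*} [MeasurableSpace X] {d : ℕ}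
    (μ : Measure X) (α : (Fin d → ℤ) → X → X) {r : ℕ}
    (n : Fin r → (Fin d → ℤ)) : Prop :=
  ∀ A : Fin r → Set X, (∀ i, MeasurableSet (A i)) →
    Tendsto (fun k : ℕ => μ (⋂ i, α ((k : ℤ) • n i) ⁻¹' A i)) atTop (𝓝 (∏ i, μ (A i)))

/-- The shape order of mixing `S(α)`: the supremum of all `r` such that every
`r`-element subset of `ℤ^d` is a mixing shape for `α`. -/
def shapeMixingOrder {X : Type*} [MeasurableSpace X] {d : ℕ}
    (μ : Measure X) (α : (Fin d → ℤ) → X → X) : ℕ∞ :=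
  sSup ((↑) '' {r : ℕ | ∀ n : Fin r → (Fin d → ℤ), Function.Injective n →
    IsMixingShape μ α n})

instance (p : ℕ) : TopologicalSpace (ZMod p) := ⊥
instance (p : ℕ) : DiscreteTopology (ZMod p) := ⟨rfl⟩

/-- The Pontryagin dual of `R_{d,p}/⟨f⟩`, realized concretely as the closed
shift-invariant subgroup of `(𝔽_p)^{ℤ^d}` consisting of the configurations
annihilated by `f`. -/
def XfGroup {p d : ℕ} (f : Rdp p d) : AddSubgroup ((Fin d → ℤ) → ZMod p) where
  carrier := {x | ∀ m : Fin d → ℤ, ∑ n ∈ f.coeff.support, f.coeff n * x (m + n) = 0}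
  zero_mem' := by simp
  add_mem' := by
    intro x y hx hy m
    simp only [Pi.add_apply, mul_add, Finset.sum_add_distrib]
    rw [hx m, hy m, add_zero]
  neg_mem' := by
    intro x hx m
    simp only [Pi.neg_apply, mul_neg]
    rw [Finset.sum_neg_distrib, hx m, neg_zero]

/-- The compact abelian group `X_f` dual to the discrete group `R_{d,p}/⟨f⟩`. -/
abbrev Xf {p d : ℕ} (f : Rdp p d) : Type := ↥(XfGroup f)

instance {p d : ℕ} (f : Rdp p d) [Fact p.Prime] : CompactSpace (Xf f) := by
  have h : IsClosed (XfGroup f : Set ((Fin d → ℤ) → ZMod p)) := by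
    have : (XfGroup f : Set ((Fin d → ℤ) → ZMod p)) =
        ⋂ m : Fin d → ℤ, (fun x : (Fin d → ℤ) → ZMod p =>
          ∑ n ∈ f.coeff.support, f.coeff n * x (m + n)) ⁻¹' {0} := by
      ext x
      simp [XfGroup, Set.mem_iInter]
    rw [this]
    exact isClosed_iInter fun m => IsClosed.preimage
      (continuous_finset_sum _ fun n _ =>
        Continuous.comp continuous_of_discreteTopology (continuous_apply (m + n)))
      isClosed_singleton
  exact isCompact_iff_compactSpace.mp h.isCompact

instance {p d : ℕ} (f : Rdp p d) : MeasurableSpace (Xf f) := borel _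
instance {p d : ℕ} (f : Rdp p d) : BorelSpace (Xf f) := ⟨rfl⟩

/-- The algebraic `ℤ^d`-action `α_f` on `X_f`: the shift action, in which `α_f^k`
is dual to multiplication by the monomial `u^k` on `R_{d,p}/⟨f⟩`. -/
def shiftAction {p d : ℕ} (f : Rdp p d) (k : Fin d → ℤ) (x : Xf f) : Xf f :=
  ⟨fun m => x.1 (m + k), by
    intro m
    have := x.2 (m + k)
    simpa [add_right_comm] using this⟩

namespace AddMonoidAlgebra

variable {R G : Type*} [CommSemiring R]

def pairing (x : G → R) : AddMonoidAlgebra R G →+ R :=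
  (Finsupp.linearCombination R x).toAddMonoidHom.comp coeffAddEquiv.toAddMonoidHom

theorem pairing_apply (x : G → R) (q : AddMonoidAlgebra R G) :
    pairing x q = ∑ n ∈ q.coeff.support, q.coeff n * x n := by
  simp [pairing, Finsupp.linearCombination_apply, Finsupp.sum]

theorem pairing_single (x : G → R) (n : G) (c : R) : pairing x (single n c) = c * x n := by
  simp [pairing]

variable [AddCommMonoid G]

instance {p : ℕ} [ExpChar R p] : ExpChar (AddMonoidAlgebra R G) p :=
  expChar_of_injective_ringHom (f := singleZeroRingHom) single_right_injective p

theorem pow_expChar_pow (p : ℕ) [ExpChar R p] (q : AddMonoidAlgebra R G) (j : ℕ) :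
    q ^ p ^ j = ∑ n ∈ q.coeff.support, single (p ^ j • n) (q.coeff n ^ p ^ j) := by
  conv_lhs => rw [← sum_coeff_single q]
  rw [Finsupp.sum, sum_pow_char_pow]
  simp only [single_pow]

theorem pairing_single_mul (x : G → R) (k : G) (c : R) (q : AddMonoidAlgebra R G) :
    pairing x (single k c * q) = c * pairing (fun n => x (k + n)) q := by
  induction q using induction_linear with
  | zero => simp
  | add q₁ q₂ h₁ h₂ => rw [mul_add, map_add, map_add, h₁, h₂, mul_add]
  | single n c' => rw [single_mul_single, pairing_single, pairing_single, mul_assoc]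

theorem pairing_single_one_eq (φ : AddMonoidAlgebra R G →ₗ[R] R) (q : AddMonoidAlgebra R G) :
    pairing (fun n => φ (single n 1)) q = φ q := by
  induction q using induction_linear with
  | zero => simp
  | add q₁ q₂ h₁ h₂ => rw [map_add, map_add, h₁, h₂]
  | single n c => rw [pairing_single, ← smul_eq_mul, ← map_smul, smul_single, smul_eq_mul, mul_one]

def annihilator (x : G → R) : Ideal (AddMonoidAlgebra R G) where
  carrier := {q | ∀ m, pairing (fun n => x (m + n)) q = 0}
  zero_mem' := by simp
  add_mem' ha hb m := by rw [map_add, ha m, hb m, add_zero]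
  smul_mem' g q hq := by
    induction g using induction_linear with
    | zero => simp
    | add g₁ g₂ h₁ h₂ =>
      intro m
      rw [smul_eq_mul, add_mul, map_add, ← smul_eq_mul, h₁ m, ← smul_eq_mul, h₂ m, add_zero]
    | single k c =>
      intro m
      rw [smul_eq_mul, pairing_single_mul]
      simp only [← add_assoc]
      rw [hq (m + k), mul_zero]

end AddMonoidAlgebra

theorem measure_preimage_singleton_ne_zero {G F : Type*} [AddGroup G] [MeasurableSpace G]
    [MeasurableAdd G] [AddCommGroup F] [Finite F] (μ : Measure G) [NeZero μ]
    [μ.IsAddLeftInvariant] {φ : G →+ F} (hφ : Function.Surjective φ) (c : F) :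
    μ (φ ⁻¹' {c}) ≠ 0 := by
  have hfiber : ∀ c', μ (φ ⁻¹' {c'}) = μ (φ ⁻¹' {c}) := by
    intro c'
    obtain ⟨g, hg⟩ := hφ (c - c')
    rw [← measure_preimage_add μ g (φ ⁻¹' {c})]
    congr 1
    ext h
    simp only [Set.mem_preimage, Set.mem_singleton_iff, map_add, hg]
    rw [add_comm, ← eq_sub_iff_add_eq, sub_sub_cancel]
  intro h0
  have huniv : (Set.univ : Set G) = ⋃ c', φ ⁻¹' {c'} := by
    rw [← Set.preimage_iUnion, Set.iUnion_of_singleton, Set.preimage_univ]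
  apply NeZero.ne μ
  rw [← Measure.measure_univ_eq_zero, huniv]
  exact measure_iUnion_null fun c' => (hfiber c').trans h0

open AddMonoidAlgebra

section Xf

variable {p d : ℕ} (f : Rdp p d)

theorem mem_XfGroup_iff (x : (Fin d → ℤ) → ZMod p) : x ∈ XfGroup f ↔ f ∈ annihilator x := by
  simp only [annihilator, pairing_apply]
  rfl

theorem sum_coeff_mul_apply_add_pow_smul [Fact p.Prime] {x : (Fin d → ℤ) → ZMod p}
    (hx : x ∈ XfGroup f) (j : ℕ) (m : Fin d → ℤ) :
    ∑ n ∈ f.coeff.support, f.coeff n * x (m + p ^ j • n) = 0 := by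
  have hpow : f ^ p ^ j ∈ annihilator x := Ideal.pow_mem_of_mem _ ((mem_XfGroup_iff f x).1 hx) _
    (pow_pos (Fact.out : p.Prime).pos j)
  have hm := hpow m
  rw [pow_expChar_pow, map_sum] at hm
  simpa only [pairing_single, ZMod.pow_card_pow] using hm

theorem exists_mem_XfGroup_apply_zero_eq_one [Fact p.Prime] (hf : ¬ IsUnit f) :
    ∃ x ∈ XfGroup f, x 0 = 1 := by
  have hne : (1 : Rdp p d ⧸ Ideal.span {f}) ≠ 0 := by
    rwa [ne_comm, Ideal.Quotient.zero_ne_one_iff, ne_eq, Ideal.span_singleton_eq_top]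
  obtain ⟨χ, hχ⟩ := Module.Projective.exists_dual_eq_one (ZMod p) hne
  set φ := χ ∘ₗ (Ideal.Quotient.mkₐ (ZMod p) (Ideal.span {f})).toLinearMap
  refine ⟨fun n => φ (single n 1), (mem_XfGroup_iff f _).2 fun m => ?_, hχ⟩
  rw [← one_mul (pairing _ f), ← pairing_single_mul (fun n => φ (single n 1)),
    pairing_single_one_eq]
  simp [φ]

def evalZeroHom : Xf f →+ ZMod p :=
  (Pi.evalAddMonoidHom (fun _ => ZMod p) 0).comp (XfGroup f).subtype

theorem evalZeroHom_surjective [Fact p.Prime] (hf : ¬ IsUnit f) :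
    Function.Surjective (evalZeroHom f) := by
  obtain ⟨x, hx, hx0⟩ := exists_mem_XfGroup_apply_zero_eq_one f hf
  intro c
  refine ⟨c.val • ⟨x, hx⟩, ?_⟩
  simp [evalZeroHom, hx0, -ZMod.natCast_val, ZMod.natCast_zmod_val]

theorem measurableSet_preimage_evalZeroHom (s : Set (ZMod p)) :
    MeasurableSet (evalZeroHom f ⁻¹' s) :=
  ((isClosed_discrete s).preimage
    ((continuous_apply 0).comp continuous_subtype_val)).measurableSet

end Xf

section MixingShape

variable {X : Type*} [MeasurableSpace X] {d : ℕ} {μ : Measure X} {α : (Fin d → ℤ) → X → X}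

theorem IsMixingShape.comp_injective [IsProbabilityMeasure μ] {r s : ℕ}
    {n : Fin s → (Fin d → ℤ)} (h : IsMixingShape μ α n) {g : Fin r → Fin s}
    (hg : Function.Injective g) : IsMixingShape μ α (n ∘ g) := by
  classical
  intro A hA
  set B : Fin s → Set X := Function.extend g A fun _ => Set.univ
  have hB_out : ∀ i, i ∉ Set.range g → B i = Set.univ := fun i hi =>
    Function.extend_apply' _ _ _ fun ⟨j, hj⟩ => hi ⟨j, hj⟩
  have hB : ∀ i, MeasurableSet (B i) := by
    intro i
    by_cases hi : i ∈ Set.range g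
    · obtain ⟨j, rfl⟩ := hi
      simpa only [B, hg.extend_apply] using hA j
    · simp only [hB_out i hi, MeasurableSet.univ]
  have hinter : ∀ k : ℤ, ⋂ i, α (k • n i) ⁻¹' B i = ⋂ j, α (k • n (g j)) ⁻¹' A j := by
    intro k
    ext x
    simp only [Set.mem_iInter, Set.mem_preimage]
    refine ⟨fun hx j => by simpa only [B, hg.extend_apply] using hx (g j), fun hx i => ?_⟩
    by_cases hi : i ∈ Set.range g
    · obtain ⟨j, rfl⟩ := hi
      simpa only [B, hg.extend_apply] using hx j
    · simp only [hB_out i hi, Set.mem_univ]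
  have hprod : ∏ i, μ (B i) = ∏ j, μ (A j) := by
    rw [← Finset.prod_subset (Finset.subset_univ (Finset.univ.map ⟨g, hg⟩)) fun i _ hi => ?_]
    · simp only [Finset.prod_map, Function.Embedding.coeFn_mk, B, hg.extend_apply]
    · rw [hB_out i fun ⟨j, hj⟩ => hi (Finset.mem_map.2 ⟨j, Finset.mem_univ _, hj⟩),
        measure_univ]
  simpa only [hinter, hprod, Function.comp_apply] using h B hB

theorem not_isMixingShape_of_iInter_eq_empty {r : ℕ} {n : Fin r → (Fin d → ℤ)}
    {k : ℕ → ℕ} (hk : Tendsto k atTop atTop) {A : Fin r → Set X}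
    (hA : ∀ i, MeasurableSet (A i)) (hpos : ∀ i, μ (A i) ≠ 0)
    (hempty : ∀ j, ⋂ i, α ((k j : ℤ) • n i) ⁻¹' A i = ∅) :
    ¬ IsMixingShape μ α n := by
  intro h
  have hlim : Tendsto (fun _ : ℕ => (0 : ENNReal)) atTop (𝓝 (∏ i, μ (A i))) :=
    ((h A hA).comp hk).congr fun j => by
      simp only [Function.comp_apply, hempty j, measure_empty]
  exact Finset.prod_ne_zero_iff.2 (fun i _ => hpos i) (tendsto_nhds_unique hlim tendsto_const_nhds)

theorem exists_injective_comp_eq {β : Type*} [Infinite β] {r s : ℕ} (hrs : r ≤ s)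
    (e : Fin r → β) : ∃ (n : Fin s → β) (g : Fin r → Fin s), Function.Injective n ∧ n ∘ g = e := by
  classical
  obtain ⟨T, hT, hcard⟩ := Infinite.exists_superset_card_eq (Finset.univ.image e) s
    (Finset.card_image_le.trans (by simpa using hrs))
  let σ := T.equivFin.trans (finCongr hcard)
  refine ⟨fun i => σ.symm i, fun j => σ ⟨e j, hT (Finset.mem_image_of_mem e (Finset.mem_univ j))⟩,
    fun i i' h => σ.symm.injective (Subtype.ext h), ?_⟩
  funext j
  simp

theorem shapeMixingOrder_le_of_not_isMixingShape [Infinite (Fin d → ℤ)] [IsProbabilityMeasure μ]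
    {r : ℕ} {e : Fin r → (Fin d → ℤ)} (he : Function.Injective e)
    (h : ¬ IsMixingShape μ α e) : shapeMixingOrder μ α ≤ ((r - 1 : ℕ) : ℕ∞) := by
  refine sSup_le ?_
  rintro _ ⟨s, hs, rfl⟩
  rw [Nat.cast_le]
  by_contra! hlt
  obtain ⟨n, g, hn, hng⟩ := exists_injective_comp_eq (by omega : r ≤ s) e
  have hg : Function.Injective g := Function.Injective.of_comp (f := n) (hng ▸ he)
  exact h (hng ▸ (hs n hn).comp_injective hg)

end MixingShape

section Support

variable {p d : ℕ} [Fact p.Prime] {f : Rdp p d}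

theorem iInter_shiftAction_preimage_evalZeroHom_eq_empty {r : ℕ} {e : Fin r → (Fin d → ℤ)}
    (he : Function.Injective e) (hrange : Set.range e = f.coeff.support) {a : Fin r → ZMod p}
    (ha : ∑ i, f.coeff (e i) * a i ≠ 0) (j : ℕ) :
    ⋂ i, shiftAction f (((p ^ j : ℕ) : ℤ) • e i) ⁻¹' (evalZeroHom f ⁻¹' {a i}) = ∅ := by
  refine Set.eq_empty_iff_forall_notMem.2 fun x hx => ha ?_
  have hxa : ∀ i, x.1 (0 + p ^ j • e i) = a i := by
    intro i
    simpa [shiftAction, evalZeroHom, natCast_zsmul] using Set.mem_iInter.1 hx i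
  have himage : Finset.univ.image e = f.coeff.support := Finset.coe_injective (by simp [hrange])
  simp only [← hxa]
  rw [← sum_coeff_mul_apply_add_pow_smul f x.2 j 0, ← himage, Finset.sum_image he.injOn]

theorem not_isMixingShape_of_range_eq_support (hf₀ : f ≠ 0) (hf : ¬ IsUnit f)
    (μ : Measure (Xf f)) [IsProbabilityMeasure μ] [μ.IsAddLeftInvariant] {r : ℕ}
    {e : Fin r → (Fin d → ℤ)} (he : Function.Injective e)
    (hrange : Set.range e = f.coeff.support) : ¬ IsMixingShape μ (shiftAction f) e := by
  obtain ⟨i₀, hi₀⟩ : ∃ i₀, f.coeff (e i₀) ≠ 0 := by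
    obtain ⟨n, hn⟩ := Finsupp.support_nonempty_iff.2 (coeff_eq_zero.not.2 hf₀)
    obtain ⟨i₀, rfl⟩ : n ∈ Set.range e := hrange ▸ hn
    exact ⟨i₀, Finsupp.mem_support_iff.1 hn⟩
  refine not_isMixingShape_of_iInter_eq_empty
    (tendsto_pow_atTop_atTop_of_one_lt (Fact.out : p.Prime).one_lt)
    (fun i => measurableSet_preimage_evalZeroHom f _)
    (fun i => measure_preimage_singleton_ne_zero μ (evalZeroHom_surjective f hf) _)
    (iInter_shiftAction_preimage_evalZeroHom_eq_empty he hrange (a := Pi.single i₀ 1) ?_)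
  simpa [Pi.single_apply] using hi₀

end Support

theorem support_is_nonmixing_shape_general
    {p d : ℕ} [Fact p.Prime] (hd : 1 ≤ d) (f : Rdp p d)
    (hirr : Irreducible f)
    (μ : Measure (Xf f)) [IsProbabilityMeasure μ] [μ.IsAddLeftInvariant] :
    (∀ e : Fin f.coeff.support.card → (Fin d → ℤ), Function.Injective e →
      Set.range e = (f.coeff.support : Set (Fin d → ℤ)) →
        ¬ IsMixingShape μ (shiftAction f) e) ∧
    shapeMixingOrder μ (shiftAction f) ≤ ((f.coeff.support.card - 1 : ℕ) : ℕ∞) := by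
  have hsupport := fun {r} (e : Fin r → (Fin d → ℤ)) he hrange =>
    not_isMixingShape_of_range_eq_support hirr.ne_zero hirr.not_isUnit μ (e := e) he hrange
  refine ⟨fun e => hsupport e, ?_⟩
  have : Infinite (Fin d → ℤ) := Pi.infinite_of_exists_right (⟨0, hd⟩ : Fin d)
  let e : Fin f.coeff.support.card → (Fin d → ℤ) := Subtype.val ∘ f.coeff.support.equivFin.symm
  have he : Function.Injective e :=
    Subtype.val_injective.comp f.coeff.support.equivFin.symm.injective
  have hrange : Set.range e = f.coeff.support := by
    rw [EquivLike.range_comp, Subtype.range_coe]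
  exact shapeMixingOrder_le_of_not_isMixingShape he (hsupport e he hrange)

/-- For an irreducible `f ∈ R_{d,p}` with at least two monomials,
the support `S(f)` is a non-mixing shape for the algebraic `ℤ^d`-action `α_f`
associated to `R_{d,p}/⟨f⟩`; consequently `S(α_f) ≤ |S(f)| - 1`. -/
theorem support_is_nonmixing_shape
    {p d : ℕ} [Fact p.Prime] (hd : 1 ≤ d) (f : Rdp p d)
    (hirr : Irreducible f) (hcard : 2 ≤ f.coeff.support.card)
    (μ : Measure (Xf f)) [IsProbabilityMeasure μ] [μ.IsAddLeftInvariant] :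
    (∀ e : Fin f.coeff.support.card → (Fin d → ℤ), Function.Injective e →
      Set.range e = (f.coeff.support : Set (Fin d → ℤ)) →
        ¬ IsMixingShape μ (shiftAction f) e) ∧
    shapeMixingOrder μ (shiftAction f) ≤ ((f.coeff.support.card - 1 : ℕ) : ℕ∞) :=
  support_is_nonmixing_shape_general hd f hirr μ
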